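/- Let n ≥ 2, let a, h be reals with a - h(n-1) = 1 and a + h > 0, and set ã = (1+h)/(a+h), h̃ = -h/(a+h). Then ã - (n-1)h̃ = 1, ã + h̃ > 0, and the n×n matrices G (diagonal a, off-diagonal -h) and G̃ (diagonal ã, off-diagonal -h̃) satisfy G·G̃ = Iₙ. In particular the dual of a tame lattice with parameters (a,h) is tame with parameters ((1+h)/(a+h), h/(a+h)). -/

import Mathlib

/-!
Writing `J` for the all-ones matrix, `G = (a + h) • 1 - h • J` and `J * J = n • J`, so matrices
of the form `c • 1 - d • J` multiply by a formula in the scalars alone. Since `a + h = 1 + n h`,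
the scalars of `G * G̃` are `(a + h)(ã + h̃) = 1` and a `J`-coefficient that vanishes.
-/

namespace Matrix

variable {ι R : Type*}

theorem of_one_mul_of_one [Fintype ι] [NonAssocSemiring R] :
    (of 1 : Matrix ι ι R) * of 1 = (Fintype.card ι : R) • of 1 := by
  ext i j
  simp [mul_apply]

variable [DecidableEq ι] [CommRing R]

theorem eq_smul_one_sub_smul_of_one {M : Matrix ι ι R} {a h : R}
    (hM : ∀ i j, M i j = if i = j then a else -h) : M = (a + h) • 1 - h • of 1 := by
  ext i j
  rw [hM]
  split_ifs with hij <;> simp [hij]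

theorem smul_one_sub_smul_of_one_mul [Fintype ι] (c d c' d' : R) :
    (c • 1 - d • of 1 : Matrix ι ι R) * (c' • 1 - d' • of 1) =
      (c * c') • 1 - (c * d' + d * c' - Fintype.card ι * d * d') • of 1 := by
  simp only [sub_mul, mul_sub, smul_mul_smul, Matrix.mul_one, Matrix.one_mul, of_one_mul_of_one,
    smul_smul]
  module

end Matrix

theorem stmt_10 (n : ℕ) (a h : ℝ)
    (hah : a - h * (n - 1) = 1) (hpos : a + h > 0)
    (a' h' : ℝ) (ha' : a' = (1 + h) / (a + h)) (hh' : h' = -h / (a + h))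
    (G G' : Matrix (Fin n) (Fin n) ℝ)
    (hG : ∀ i j, G i j = if i = j then a else -h)
    (hG' : ∀ i j, G' i j = if i = j then a' else -h') :
    a' - h' * (n - 1) = 1 ∧ a' + h' > 0 ∧ G * G' = 1 := by
  have hsum : a' + h' = 1 / (a + h) := by
    rw [ha', hh']
    ring
  refine ⟨?_, hsum ▸ by positivity, ?_⟩
  · rw [ha', hh']
    field_simp
    linear_combination -hah
  · have hJ : (a + h) * h' + h * (a' + h') - n * h * h' = 0 := by
      rw [hsum, hh']
      field_simp
      linear_combination -h * hah
    rw [Matrix.eq_smul_one_sub_smul_of_one hG, Matrix.eq_smul_one_sub_smul_of_one hG',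
      Matrix.smul_one_sub_smul_of_one_mul, Fintype.card_fin, hJ, hsum,
      mul_one_div_cancel hpos.ne', one_smul, zero_smul, sub_zero]
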